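/- Second-order error estimate for the prototypical method: assume there are constants C_Π > 0 and H > 0 such that |v − Π_H v|_{M,T} ≤ C_Π H |v|_{L,T} for every element T ∈ 𝒯_H and every v : 𝒩 → ℝ. Let f̃ : 𝒩 → ℝ be defined by f(x) = m(x) f̃(x) for every node x, where m(x) = ½ Σ_{y∼x} |x−y|^{2−α} > 0 is the diagonal entry of M at x. Then the Galerkin approximation u_H satisfies |u − u_H|_L ≤ C_Π γ⁻¹ H |f̃ − Π_H f̃|_M ≤ C_Π² γ⁻¹ H² |f̃|_L. -/

import Mathlib

open Finset

variable {n : ℕ} {N : Type*}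

/-- The (edge-weighted) mass bilinear form `(M_S u, v)`. -/
noncomputable def Mform [Fintype N] (G : SimpleGraph N) [DecidableRel G.Adj]
    (pos : N → EuclideanSpace ℝ (Fin n)) (α : ℝ) (S : Finset N) (u v : N → ℝ) : ℝ :=
  ∑ x ∈ S, (1 / 2 : ℝ) * ∑ y ∈ G.neighborFinset x,
    dist (pos x) (pos y) ^ ((2 : ℝ) - α) * (u x * v x)

/-- The (edge-weighted) stiffness bilinear form `(L_S u, v)`. -/
noncomputable def Lform [Fintype N] (G : SimpleGraph N) [DecidableRel G.Adj]
    (pos : N → EuclideanSpace ℝ (Fin n)) (α : ℝ) (S : Finset N) (u v : N → ℝ) : ℝ :=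
  ∑ x ∈ S, (1 / 2 : ℝ) * ∑ y ∈ G.neighborFinset x,
    ((u x - u y) * (v x - v y)) / dist (pos x) (pos y) ^ α

/-- `|v|_{M,S}`. -/
noncomputable def Mnorm [Fintype N] (G : SimpleGraph N) [DecidableRel G.Adj]
    (pos : N → EuclideanSpace ℝ (Fin n)) (α : ℝ) (S : Finset N) (v : N → ℝ) : ℝ :=
  Real.sqrt (Mform G pos α S v v)

/-- `|v|_{L,S}`. -/
noncomputable def Lnorm [Fintype N] (G : SimpleGraph N) [DecidableRel G.Adj]
    (pos : N → EuclideanSpace ℝ (Fin n)) (α : ℝ) (S : Finset N) (v : N → ℝ) : ℝ :=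
  Real.sqrt (Lform G pos α S v v)

/-- The element average `q_T(v) = (M_T v, 1) / |1|_{M,T}^2`. -/
noncomputable def avg [Fintype N] (G : SimpleGraph N) [DecidableRel G.Adj]
    (pos : N → EuclideanSpace ℝ (Fin n)) (α : ℝ) (T : Finset N) (v : N → ℝ) : ℝ :=
  Mform G pos α T v (fun _ => 1) / Mform G pos α T (fun _ => 1) (fun _ => 1)

/-- Euclidean inner product of functions on the node set. -/
noncomputable def ip [Fintype N] (u v : N → ℝ) : ℝ := ∑ x, u x * v x

/-- Length of a walk: the sum of Euclidean edge lengths. -/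
noncomputable def wlen (G : SimpleGraph N) (pos : N → EuclideanSpace ℝ (Fin n))
    {x y : N} (w : G.Walk x y) : ℝ :=
  (w.darts.map (fun d => dist (pos d.toProd.1) (pos d.toProd.2))).sum

/-- Graph distance from `x` to the boundary set `bnd`, along paths inside `T`. -/
noncomputable def distT (G : SimpleGraph N) (pos : N → EuclideanSpace ℝ (Fin n))
    (T bnd : Finset N) (x : N) : ℝ :=
  sInf {ℓ : ℝ | ∃ y ∈ bnd, ∃ w : G.Walk x y, (∀ z ∈ w.support, z ∈ T) ∧ ℓ = wlen G pos w}

/-- The non-normalized bubble function `b̃_T`. -/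
noncomputable def btilde [DecidableEq N] (G : SimpleGraph N) (pos : N → EuclideanSpace ℝ (Fin n))
    (T bnd : Finset N) : N → ℝ :=
  fun x => if x ∈ T then distT G pos T bnd x else 0

/-!
The Galerkin error `e = u - u_H` is `K`-orthogonal to `V_H`. Since `K` is definite on `V`
(the graph is connected and `Γ ≠ ∅`), `V = W ⊕ V_H`, so `e` lies in the fine space `W` and
`Π_H e = 0`. Testing with `e`, and using that `M (Π_H f̃)` is orthogonal to `W`,
`γ |e|_L² ≤ (K e, e) = (f, e) = (M (f̃ - Π_H f̃), e) ≤ |f̃ - Π_H f̃|_M |e|_M`, and the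
approximation property applied to `e` gives `|e|_M ≤ C_Π H |e|_L`. The second inequality is the
approximation property for `f̃`, summed over the elements.
-/

theorem Finset.sum_sum_eq_sum_of_partition {ι M : Type*} [Fintype ι] [AddCommMonoid M]
    {P : Finset (Finset ι)}
    (hPdisj : ∀ T ∈ P, ∀ S ∈ P, T ≠ S → Disjoint T S) (hPcover : ∀ x, ∃ T ∈ P, x ∈ T)
    (g : ι → M) : ∑ T ∈ P, ∑ x ∈ T, g x = ∑ x, g x := by
  classical
  have hU : P.biUnion (fun T => T) = univ :=
    eq_univ_of_forall fun x => by simpa using hPcover x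
  rw [← hU, sum_biUnion hPdisj]

theorem le_inv_mul_of_mul_sq_le_mul {x a γ : ℝ} (hx : 0 ≤ x) (ha : 0 ≤ a) (hγ : 0 < γ)
    (h : γ * x ^ 2 ≤ a * x) : x ≤ γ⁻¹ * a := by
  rcases hx.eq_or_lt with rfl | hx
  · positivity
  · rw [le_inv_mul_iff₀ hγ]
    exact le_of_mul_le_mul_right (by nlinarith) hx

namespace LinearMap.BilinForm

variable {K E : Type*} [Field K] [AddCommGroup E] [Module K E] [FiniteDimensional K E]

theorem mem_of_forall_inf_orthogonal {B : LinearMap.BilinForm K E} (hB : B.IsSymm)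
    {V W : Submodule K E} (hWV : W ≤ V) (hdef : ∀ v ∈ V, B v v = 0 → v = 0)
    {e : E} (he : e ∈ V) (horth : ∀ z ∈ V, z ∈ B.orthogonal W → B e z = 0) : e ∈ W := by
  have hnd : (B.restrict W).Nondegenerate := by
    refine ⟨?_, ?_⟩ <;>
      exact fun w hw => Subtype.ext (hdef w (hWV w.2) (hw w))
  have hsup : e ∈ W ⊔ B.orthogonal W := by
    rw [(B.isCompl_orthogonal_of_restrict_nondegenerate hB.isRefl hnd).sup_eq_top]
    trivial
  obtain ⟨w, hw, z, hz, rfl⟩ := Submodule.mem_sup.1 hsup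
  have hzV : z ∈ V := by simpa using V.sub_mem he (hWV hw)
  have hzz : B z z = 0 := by
    have := horth z hzV hz
    rwa [map_add, LinearMap.add_apply, (B.mem_orthogonal_iff.1 hz) w hw, zero_add] at this
  rwa [hdef z hzV hzz, add_zero]

end LinearMap.BilinForm

noncomputable def nodeMass [Fintype N] (G : SimpleGraph N) [DecidableRel G.Adj]
    (pos : N → EuclideanSpace ℝ (Fin n)) (α : ℝ) (x : N) : ℝ :=
  (1 / 2 : ℝ) * ∑ y ∈ G.neighborFinset x, dist (pos x) (pos y) ^ ((2 : ℝ) - α)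

def dirichletSubspace (Γ : Set N) : Submodule ℝ (N → ℝ) :=
  ⨅ x ∈ Γ, LinearMap.ker (LinearMap.proj x)

theorem mem_dirichletSubspace {Γ : Set N} {v : N → ℝ} :
    v ∈ dirichletSubspace Γ ↔ ∀ x ∈ Γ, v x = 0 := by
  simp [dirichletSubspace]

theorem ip_comm [Fintype N] (u v : N → ℝ) : ip u v = ip v u :=
  dotProduct_comm u v

theorem ip_sub_left [Fintype N] (u v w : N → ℝ) : ip (u - v) w = ip u w - ip v w :=
  sub_dotProduct u v w

noncomputable def energyForm [Fintype N] (K : (N → ℝ) →ₗ[ℝ] (N → ℝ)) :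
    LinearMap.BilinForm ℝ (N → ℝ) :=
  LinearMap.BilinForm.compLeft (dotProductBilin ℝ ℝ) K

theorem energyForm_apply [Fintype N] (K : (N → ℝ) →ₗ[ℝ] (N → ℝ)) (u v : N → ℝ) :
    energyForm K u v = ip (K u) v :=
  rfl

theorem energyForm_isSymm [Fintype N] {K : (N → ℝ) →ₗ[ℝ] (N → ℝ)}
    (hK : ∀ u v : N → ℝ, ip (K u) v = ip u (K v)) : (energyForm K).IsSymm :=
  ⟨fun u v => by rw [energyForm_apply, energyForm_apply, hK, ip_comm]⟩

theorem Lform_summand_nonneg (pos : N → EuclideanSpace ℝ (Fin n)) (α : ℝ) (v : N → ℝ)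
    (x y : N) :
    0 ≤ (v x - v y) * (v x - v y) / dist (pos x) (pos y) ^ α :=
  div_nonneg (mul_self_nonneg _) (Real.rpow_nonneg dist_nonneg _)

section Forms

variable [Fintype N] (G : SimpleGraph N) [DecidableRel G.Adj]
  (pos : N → EuclideanSpace ℝ (Fin n)) (α : ℝ)

theorem nodeMass_nonneg (x : N) : 0 ≤ nodeMass G pos α x :=
  mul_nonneg (by norm_num) (sum_nonneg fun _ _ => Real.rpow_nonneg dist_nonneg _)

theorem Mform_eq_sum_nodeMass (S : Finset N) (u v : N → ℝ) :
    Mform G pos α S u v = ∑ x ∈ S, nodeMass G pos α x * (u x * v x) := by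
  simp only [Mform, nodeMass, sum_mul, mul_assoc]

theorem Mform_sub_left (S : Finset N) (u u' v : N → ℝ) :
    Mform G pos α S (u - u') v = Mform G pos α S u v - Mform G pos α S u' v := by
  simp only [Mform_eq_sum_nodeMass, Pi.sub_apply, sub_mul, mul_sub, sum_sub_distrib]

theorem Mform_self_nonneg (S : Finset N) (v : N → ℝ) : 0 ≤ Mform G pos α S v v := by
  rw [Mform_eq_sum_nodeMass]
  exact sum_nonneg fun x _ => mul_nonneg (nodeMass_nonneg G pos α x) (mul_self_nonneg _)

theorem Lform_self_nonneg (S : Finset N) (v : N → ℝ) : 0 ≤ Lform G pos α S v v :=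
  sum_nonneg fun x _ => mul_nonneg (by norm_num)
    (sum_nonneg fun y _ => Lform_summand_nonneg pos α v x y)

theorem Mnorm_sq (S : Finset N) (v : N → ℝ) : Mnorm G pos α S v ^ 2 = Mform G pos α S v v :=
  Real.sq_sqrt (Mform_self_nonneg G pos α S v)

theorem Lnorm_sq (S : Finset N) (v : N → ℝ) : Lnorm G pos α S v ^ 2 = Lform G pos α S v v :=
  Real.sq_sqrt (Lform_self_nonneg G pos α S v)

theorem Mform_le_Mnorm_mul_Mnorm (S : Finset N) (u v : N → ℝ) :
    Mform G pos α S u v ≤ Mnorm G pos α S u * Mnorm G pos α S v := by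
  have hm := nodeMass_nonneg G pos α
  set m := nodeMass G pos α
  calc Mform G pos α S u v = ∑ x ∈ S, (√(m x) * u x) * (√(m x) * v x) := by
        rw [Mform_eq_sum_nodeMass]
        exact sum_congr rfl fun x _ => by rw [mul_mul_mul_comm, Real.mul_self_sqrt (hm x)]
    _ ≤ √(∑ x ∈ S, (√(m x) * u x) ^ 2) * √(∑ x ∈ S, (√(m x) * v x) ^ 2) :=
        Real.sum_mul_le_sqrt_mul_sqrt _ _ _
    _ = Mnorm G pos α S u * Mnorm G pos α S v := by
        have hsq (x : N) : √(m x) ^ 2 = m x := Real.sq_sqrt (hm x)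
        simp only [Mnorm, Mform_eq_sum_nodeMass, mul_pow, hsq, ← sq]
        rfl

theorem ip_eq_Mform_univ {f g : N → ℝ} (hf : ∀ x, f x = nodeMass G pos α x * g x)
    (v : N → ℝ) : ip f v = Mform G pos α univ g v := by
  simp only [ip, Mform_eq_sum_nodeMass, hf, mul_assoc]

theorem Mform_univ_eq_sum_of_partition {P : Finset (Finset N)}
    (hPdisj : ∀ T ∈ P, ∀ S ∈ P, T ≠ S → Disjoint T S) (hPcover : ∀ x, ∃ T ∈ P, x ∈ T)
    (u v : N → ℝ) : Mform G pos α univ u v = ∑ T ∈ P, Mform G pos α T u v :=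
  (sum_sum_eq_sum_of_partition hPdisj hPcover _).symm

theorem Lform_univ_eq_sum_of_partition {P : Finset (Finset N)}
    (hPdisj : ∀ T ∈ P, ∀ S ∈ P, T ≠ S → Disjoint T S) (hPcover : ∀ x, ∃ T ∈ P, x ∈ T)
    (u v : N → ℝ) : Lform G pos α univ u v = ∑ T ∈ P, Lform G pos α T u v :=
  (sum_sum_eq_sum_of_partition hPdisj hPcover _).symm

theorem Mnorm_univ_le_of_forall_mem_partition {P : Finset (Finset N)}
    (hPdisj : ∀ T ∈ P, ∀ S ∈ P, T ≠ S → Disjoint T S) (hPcover : ∀ x, ∃ T ∈ P, x ∈ T)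
    {c : ℝ} (hc : 0 ≤ c) {u v : N → ℝ}
    (h : ∀ T ∈ P, Mnorm G pos α T u ≤ c * Lnorm G pos α T v) :
    Mnorm G pos α univ u ≤ c * Lnorm G pos α univ v := by
  have hsq : Mform G pos α univ u u ≤ c ^ 2 * Lform G pos α univ v v := by
    rw [Mform_univ_eq_sum_of_partition G pos α hPdisj hPcover,
      Lform_univ_eq_sum_of_partition G pos α hPdisj hPcover, mul_sum]
    refine sum_le_sum fun T hT => ?_
    rw [← Mnorm_sq, ← Lnorm_sq, ← mul_pow]
    exact pow_le_pow_left₀ (Real.sqrt_nonneg _) (h T hT) 2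
  rw [Mnorm, Lnorm, ← Real.sqrt_sq hc, ← Real.sqrt_mul (sq_nonneg c)]
  exact Real.sqrt_le_sqrt hsq

variable {G pos α}

theorem eq_of_adj_of_Lform_self_eq_zero (hdist : ∀ x y, G.Adj x y → 0 < dist (pos x) (pos y))
    {v : N → ℝ} (hL : Lform G pos α univ v v = 0) {a b : N} (hab : G.Adj a b) : v a = v b := by
  have hsum : ∑ y ∈ G.neighborFinset a, (v a - v y) * (v a - v y) / dist (pos a) (pos y) ^ α
      = 0 := by
    have := (sum_eq_zero_iff_of_nonneg fun x _ => mul_nonneg (by norm_num)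
      (sum_nonneg fun y _ => Lform_summand_nonneg pos α v x y)).1 hL a (mem_univ a)
    simpa using this
  have hab' := (sum_eq_zero_iff_of_nonneg fun y _ => Lform_summand_nonneg pos α v a y).1 hsum b
    ((G.mem_neighborFinset a b).2 hab)
  rwa [div_eq_zero_iff, or_iff_left (Real.rpow_pos_of_pos (hdist a b hab) α).ne',
    mul_self_eq_zero, sub_eq_zero] at hab'

theorem eq_zero_of_Lform_self_eq_zero (hdist : ∀ x y, G.Adj x y → 0 < dist (pos x) (pos y))
    (hconn : G.Connected) {Γ : Set N} (hΓ : Γ.Nonempty) {v : N → ℝ} (hv : ∀ x ∈ Γ, v x = 0)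
    (hL : Lform G pos α univ v v = 0) : v = 0 := by
  obtain ⟨x₀, hx₀⟩ := hΓ
  have hwalk {a b : N} (w : G.Walk a b) : v a = v b := by
    induction w with
    | nil => rfl
    | cons hadj _ ih => exact (eq_of_adj_of_Lform_self_eq_zero hdist hL hadj).trans ih
  funext x
  rw [Pi.zero_apply, hwalk (hconn.preconnected x x₀).some, hv x₀ hx₀]

theorem Lnorm_le_of_mul_Lform_self_le_Mform {S : Finset N} {c γ : ℝ} (hc : 0 ≤ c) (hγ : 0 < γ)
    {d e : N → ℝ} (hMe : Mnorm G pos α S e ≤ c * Lnorm G pos α S e)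
    (h : γ * Lform G pos α S e e ≤ Mform G pos α S d e) :
    Lnorm G pos α S e ≤ γ⁻¹ * (c * Mnorm G pos α S d) := by
  refine le_inv_mul_of_mul_sq_le_mul (Real.sqrt_nonneg _) (mul_nonneg hc (Real.sqrt_nonneg _)) hγ ?_
  calc γ * Lnorm G pos α S e ^ 2 = γ * Lform G pos α S e e := by rw [Lnorm_sq]
    _ ≤ Mform G pos α S d e := h
    _ ≤ Mnorm G pos α S d * Mnorm G pos α S e := Mform_le_Mnorm_mul_Mnorm G pos α S d e
    _ ≤ Mnorm G pos α S d * (c * Lnorm G pos α S e) :=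
      mul_le_mul_of_nonneg_left hMe (Real.sqrt_nonneg _)
    _ = c * Mnorm G pos α S d * Lnorm G pos α S e := by ring

theorem eq_zero_of_energyForm_self_eq_zero
    (hdist : ∀ x y, G.Adj x y → 0 < dist (pos x) (pos y)) (hconn : G.Connected)
    {Γ : Set N} (hΓ : Γ.Nonempty) {K : (N → ℝ) →ₗ[ℝ] (N → ℝ)} {γ : ℝ} (hγ : 0 < γ)
    (hK : ∀ v, (∀ x ∈ Γ, v x = 0) → γ * Lform G pos α univ v v ≤ ip (K v) v)
    {v : N → ℝ} (hv : v ∈ dirichletSubspace Γ) (h0 : energyForm K v v = 0) : v = 0 := by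
  rw [mem_dirichletSubspace] at hv
  refine eq_zero_of_Lform_self_eq_zero hdist hconn hΓ hv
    (le_antisymm ?_ (Lform_self_nonneg G pos α univ v))
  nlinarith [hK v hv, energyForm_apply K v v]

end Forms

section FineSpace

variable [Fintype N] (G : SimpleGraph N) [DecidableRel G.Adj]
  (pos : N → EuclideanSpace ℝ (Fin n)) (α : ℝ)

noncomputable def elementMass (T : Finset N) : (N → ℝ) →ₗ[ℝ] ℝ :=
  ∑ x ∈ T, nodeMass G pos α x • LinearMap.proj x

theorem elementMass_apply (T : Finset N) (v : N → ℝ) :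
    elementMass G pos α T v = Mform G pos α T v (fun _ => 1) := by
  simp [elementMass, Mform_eq_sum_nodeMass]

-- `W = {v ∈ V : Π_H v = 0}`, written through the element masses `(M_T v, 1)` so that it is
-- visibly a subspace; `PiH_eq_zero_iff` identifies the two descriptions.
noncomputable def fineSpace (Γ : Set N) (P : Finset (Finset N)) : Submodule ℝ (N → ℝ) :=
  dirichletSubspace Γ ⊓ ⨅ T ∈ P, LinearMap.ker (elementMass G pos α T)

theorem mem_fineSpace {Γ : Set N} {P : Finset (Finset N)} {v : N → ℝ} :
    v ∈ fineSpace G pos α Γ P ↔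
      v ∈ dirichletSubspace Γ ∧ ∀ T ∈ P, Mform G pos α T v (fun _ => 1) = 0 := by
  simp [fineSpace, elementMass_apply]

variable {G pos α}

theorem avg_eq_zero_iff (hm : ∀ x, 0 < nodeMass G pos α x) {T : Finset N} (hT : T.Nonempty)
    {v : N → ℝ} : avg G pos α T v = 0 ↔ Mform G pos α T v (fun _ => 1) = 0 := by
  have hden : 0 < Mform G pos α T (fun _ => 1) (fun _ => 1) := by
    rw [Mform_eq_sum_nodeMass]
    exact sum_pos (fun x _ => by simpa using hm x) hT
  rw [avg, div_eq_zero_iff, or_iff_left hden.ne']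

variable {P : Finset (Finset N)} {PiH : (N → ℝ) → N → ℝ}
  (hPi : ∀ v, ∀ T ∈ P, ∀ x ∈ T, PiH v x = avg G pos α T v)
include hPi

theorem PiH_eq_zero_iff (hm : ∀ x, 0 < nodeMass G pos α x)
    (hPne : ∀ T ∈ P, T.Nonempty) (hPcover : ∀ x, ∃ T ∈ P, x ∈ T) {v : N → ℝ} :
    PiH v = 0 ↔ ∀ T ∈ P, Mform G pos α T v (fun _ => 1) = 0 := by
  constructor
  · intro h T hT
    obtain ⟨x, hx⟩ := hPne T hT
    rw [← avg_eq_zero_iff hm (hPne T hT), ← hPi v T hT x hx, h, Pi.zero_apply]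
  · intro h
    funext x
    obtain ⟨T, hT, hx⟩ := hPcover x
    rw [hPi v T hT x hx, Pi.zero_apply, avg_eq_zero_iff hm ⟨x, hx⟩]
    exact h T hT

theorem Mform_univ_PiH_eq_zero
    (hPdisj : ∀ T ∈ P, ∀ S ∈ P, T ≠ S → Disjoint T S) (hPcover : ∀ x, ∃ T ∈ P, x ∈ T)
    {w : N → ℝ} (hw : ∀ T ∈ P, Mform G pos α T w (fun _ => 1) = 0) (g : N → ℝ) :
    Mform G pos α univ (PiH g) w = 0 := by
  rw [Mform_univ_eq_sum_of_partition G pos α hPdisj hPcover]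
  refine sum_eq_zero fun T hT => ?_
  have hconst : Mform G pos α T (PiH g) w = avg G pos α T g * Mform G pos α T w (fun _ => 1) := by
    simp only [Mform_eq_sum_nodeMass, mul_sum]
    exact sum_congr rfl fun x hx => by rw [hPi g T hT x hx]; ring
  rw [hconst, hw T hT, mul_zero]

theorem forall_ip_eq_zero_of_mem_orthogonal_fineSpace (hm : ∀ x, 0 < nodeMass G pos α x)
    (hPne : ∀ T ∈ P, T.Nonempty) (hPcover : ∀ x, ∃ T ∈ P, x ∈ T) {Γ : Set N}
    {K : (N → ℝ) →ₗ[ℝ] (N → ℝ)} (hK : ∀ u v : N → ℝ, ip (K u) v = ip u (K v))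
    {z : N → ℝ} (hz : z ∈ (energyForm K).orthogonal (fineSpace G pos α Γ P)) :
    ∀ w : N → ℝ, ((∀ x ∈ Γ, w x = 0) ∧ PiH w = 0) → ip (K z) w = 0 := by
  rintro w ⟨hwΓ, hwPi⟩
  rw [hK, ip_comm]
  refine (energyForm K).mem_orthogonal_iff.1 hz w ((mem_fineSpace G pos α).2 ?_)
  exact ⟨mem_dirichletSubspace.2 hwΓ, (PiH_eq_zero_iff hPi hm hPne hPcover).1 hwPi⟩

end FineSpace

theorem stmt9_general [Fintype N] (G : SimpleGraph N) [DecidableRel G.Adj]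
    (pos : N → EuclideanSpace ℝ (Fin n)) (α : ℝ)
    (hdist : ∀ x y : N, G.Adj x y → 0 < dist (pos x) (pos y))
    (hconn : G.Connected)
    (Γ : Set N) (hΓ : Γ.Nonempty)
    (P : Finset (Finset N))
    (hPne : ∀ T ∈ P, T.Nonempty)
    (hPdisj : ∀ T ∈ P, ∀ S ∈ P, T ≠ S → Disjoint T S)
    (hPcover : ∀ x : N, ∃ T ∈ P, x ∈ T)
    (Pi : (N → ℝ) → (N → ℝ))
    (hPi : ∀ v : N → ℝ, ∀ T ∈ P, ∀ x ∈ T, Pi v x = avg G pos α T v)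
    (K : (N → ℝ) →ₗ[ℝ] (N → ℝ))
    (hKsym : ∀ u v : N → ℝ, ip (K u) v = ip u (K v))
    (γ γ' : ℝ) (hγ : 0 < γ)
    (hspec : ∀ v : N → ℝ, (∀ x ∈ Γ, v x = 0) →
      γ * Lform G pos α Finset.univ v v ≤ ip (K v) v ∧
        ip (K v) v ≤ γ' * Lform G pos α Finset.univ v v)
    (f u : N → ℝ) (hu : ∀ x ∈ Γ, u x = 0)
    (hsol : ∀ v : N → ℝ, (∀ x ∈ Γ, v x = 0) → ip (K u) v = ip f v)
    (uH : N → ℝ) (huHV : ∀ x ∈ Γ, uH x = 0)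
    (huHmem : ∀ w : N → ℝ, ((∀ x ∈ Γ, w x = 0) ∧ Pi w = 0) → ip (K uH) w = 0)
    (huHsol : ∀ v : N → ℝ, ((∀ x ∈ Γ, v x = 0) ∧
        (∀ w : N → ℝ, ((∀ x ∈ Γ, w x = 0) ∧ Pi w = 0) → ip (K v) w = 0)) →
      ip (K uH) v = ip f v)
    (Cpi H : ℝ) (hCpi : 0 < Cpi) (hH : 0 < H)
    (happrox : ∀ T ∈ P, ∀ v : N → ℝ,
      Mnorm G pos α T (fun x => v x - Pi v x) ≤ Cpi * H * Lnorm G pos α T v)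
    (ftilde : N → ℝ)
    (hm : ∀ x : N, 0 < (1 / 2 : ℝ) * ∑ y ∈ G.neighborFinset x, dist (pos x) (pos y) ^ ((2 : ℝ) - α))
    (hf : ∀ x : N, f x =
      ((1 / 2 : ℝ) * ∑ y ∈ G.neighborFinset x, dist (pos x) (pos y) ^ ((2 : ℝ) - α)) * ftilde x) :
    Lnorm G pos α Finset.univ (fun x => u x - uH x) ≤
        Cpi * γ⁻¹ * H * Mnorm G pos α Finset.univ (fun x => ftilde x - Pi ftilde x) ∧
      Cpi * γ⁻¹ * H * Mnorm G pos α Finset.univ (fun x => ftilde x - Pi ftilde x) ≤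
        Cpi ^ 2 * γ⁻¹ * H ^ 2 * Lnorm G pos α Finset.univ ftilde := by
  set e := u - uH
  have hGalerkin : ∀ z, ((∀ x ∈ Γ, z x = 0) ∧
      ∀ w : N → ℝ, ((∀ x ∈ Γ, w x = 0) ∧ Pi w = 0) → ip (K z) w = 0) → ip (K e) z = 0 := by
    intro z hz
    rw [map_sub, ip_sub_left]
    exact sub_eq_zero.2 ((hsol z hz.1).trans (huHsol z hz).symm)
  have heV : e ∈ dirichletSubspace Γ :=
    mem_dirichletSubspace.2 fun x hx => by simp [e, hu x hx, huHV x hx]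
  have heW : e ∈ fineSpace G pos α Γ P :=
    LinearMap.BilinForm.mem_of_forall_inf_orthogonal (energyForm_isSymm hKsym) inf_le_left
      (fun v => eq_zero_of_energyForm_self_eq_zero hdist hconn hΓ hγ (fun v hv => (hspec v hv).1))
      heV fun z hzV hzW => hGalerkin z ⟨mem_dirichletSubspace.1 hzV,
        forall_ip_eq_zero_of_mem_orthogonal_fineSpace hPi hm hPne hPcover hKsym hzW⟩
  obtain ⟨-, heM⟩ := (mem_fineSpace G pos α).1 heW
  have hKuHe : ip (K uH) e = 0 := by
    rw [hKsym, ip_comm]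
    exact hGalerkin uH ⟨huHV, huHmem⟩
  have henergy : ip (K e) e = Mform G pos α univ (fun x => ftilde x - Pi ftilde x) e := by
    rw [map_sub, ip_sub_left, hKuHe, sub_zero, hsol e (mem_dirichletSubspace.1 heV),
      ip_eq_Mform_univ G pos α hf, ← sub_zero (Mform G pos α univ ftilde e),
      ← Mform_univ_PiH_eq_zero hPi hPdisj hPcover heM ftilde, ← Mform_sub_left]
    rfl
  have hCH : 0 ≤ Cpi * H := by positivity
  have happroxG (v : N → ℝ) :=
    Mnorm_univ_le_of_forall_mem_partition G pos α hPdisj hPcover hCH (happrox · · v)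
  have hMe : Mnorm G pos α univ e ≤ Cpi * H * Lnorm G pos α univ e := by
    simpa [(PiH_eq_zero_iff hPi hm hPne hPcover).2 heM] using happroxG e
  constructor
  · calc Lnorm G pos α univ e
        ≤ γ⁻¹ * (Cpi * H * Mnorm G pos α univ (fun x => ftilde x - Pi ftilde x)) :=
          Lnorm_le_of_mul_Lform_self_le_Mform hCH hγ hMe
            ((hspec e (mem_dirichletSubspace.1 heV)).1.trans henergy.le)
      _ = _ := by ring
  · calc Cpi * γ⁻¹ * H * Mnorm G pos α univ (fun x => ftilde x - Pi ftilde x)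
        ≤ Cpi * γ⁻¹ * H * (Cpi * H * Lnorm G pos α univ ftilde) :=
          mul_le_mul_of_nonneg_left (happroxG ftilde) (by positivity)
      _ = _ := by ring

theorem stmt9 [Fintype N] [DecidableEq N] (G : SimpleGraph N) [DecidableRel G.Adj]
    (pos : N → EuclideanSpace ℝ (Fin n)) (α : ℝ)
    (hα : 0 ≤ α ∧ α ≤ 2) (hpos : Function.Injective pos)
    (hdist : ∀ x y : N, G.Adj x y → 0 < dist (pos x) (pos y))
    (hcard : 1 < Fintype.card N) (hconn : G.Connected)
    (Γ : Set N) (hΓ : Γ.Nonempty)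
    (P : Finset (Finset N))
    (hPne : ∀ T ∈ P, T.Nonempty)
    (hPdisj : ∀ T ∈ P, ∀ S ∈ P, T ≠ S → Disjoint T S)
    (hPcover : ∀ x : N, ∃ T ∈ P, x ∈ T)
    (Pi : (N → ℝ) → (N → ℝ))
    (hPi : ∀ v : N → ℝ, ∀ T ∈ P, ∀ x ∈ T, Pi v x = avg G pos α T v)
    (K : (N → ℝ) →ₗ[ℝ] (N → ℝ))
    (hKsym : ∀ u v : N → ℝ, ip (K u) v = ip u (K v))
    (γ γ' : ℝ) (hγ : 0 < γ) (hγγ' : γ ≤ γ')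
    (hspec : ∀ v : N → ℝ, (∀ x ∈ Γ, v x = 0) →
      γ * Lform G pos α Finset.univ v v ≤ ip (K v) v ∧
        ip (K v) v ≤ γ' * Lform G pos α Finset.univ v v)
    (f u : N → ℝ) (hu : ∀ x ∈ Γ, u x = 0)
    (hsol : ∀ v : N → ℝ, (∀ x ∈ Γ, v x = 0) → ip (K u) v = ip f v)
    (uH : N → ℝ) (huHV : ∀ x ∈ Γ, uH x = 0)
    (huHmem : ∀ w : N → ℝ, ((∀ x ∈ Γ, w x = 0) ∧ Pi w = 0) → ip (K uH) w = 0)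
    (huHsol : ∀ v : N → ℝ, ((∀ x ∈ Γ, v x = 0) ∧
        (∀ w : N → ℝ, ((∀ x ∈ Γ, w x = 0) ∧ Pi w = 0) → ip (K v) w = 0)) →
      ip (K uH) v = ip f v)
    (Cpi H : ℝ) (hCpi : 0 < Cpi) (hH : 0 < H)
    (happrox : ∀ T ∈ P, ∀ v : N → ℝ,
      Mnorm G pos α T (fun x => v x - Pi v x) ≤ Cpi * H * Lnorm G pos α T v)
    (ftilde : N → ℝ)
    (hm : ∀ x : N, 0 < (1 / 2 : ℝ) * ∑ y ∈ G.neighborFinset x, dist (pos x) (pos y) ^ ((2 : ℝ) - α))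
    (hf : ∀ x : N, f x =
      ((1 / 2 : ℝ) * ∑ y ∈ G.neighborFinset x, dist (pos x) (pos y) ^ ((2 : ℝ) - α)) * ftilde x) :
    Lnorm G pos α Finset.univ (fun x => u x - uH x) ≤
        Cpi * γ⁻¹ * H * Mnorm G pos α Finset.univ (fun x => ftilde x - Pi ftilde x) ∧
      Cpi * γ⁻¹ * H * Mnorm G pos α Finset.univ (fun x => ftilde x - Pi ftilde x) ≤
        Cpi ^ 2 * γ⁻¹ * H ^ 2 * Lnorm G pos α Finset.univ ftilde :=
  stmt9_general G pos α hdist hconn Γ hΓ P hPne hPdisj hPcover Pi hPi K hKsym γ γ' hγ hspec f u hu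
    hsol uH huHV huHmem huHsol Cpi H hCpi hH happrox ftilde hm hf
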